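/- arXiv:2006.09533 — 2 statements merged into one kernel-verified Lean document; each statement's English description precedes it below -/
import Mathlib

section
/- Let T be a junction tree with cliques {C_1, ..., C_m} and suppose for each clique C_i we have a distribution p_i on {0,1}^{C_i} such that for every edge (C_i, C_j) of T the marginals of p_i and p_j on C_i ∩ C_j agree. Then there exists a joint distribution p on {0,1}^{∪C_i} whose marginal on each C_i equals p_i. -/
open scoped Classical

/-- A probability distribution on binary vectors over `Fin K`. -/
def IsDistribution {K : ℕ} (p : (Fin K → Bool) → ℝ) : Prop :=
  (∀ v, 0 ≤ p v) ∧ ∑ v, p v = 1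

/-- Marginal probability of the event "agrees with `v` on the itemset `X`". -/
noncomputable def margAt {K : ℕ} (p : (Fin K → Bool) → ℝ) (X : Finset (Fin K))
    (v : Fin K → Bool) : ℝ :=
  ∑ w : Fin K → Bool, if ∀ i ∈ X, w i = v i then p w else 0

/-- Frequency of an itemset: probability that all its attributes are 1. -/
noncomputable def pAll {K : ℕ} (p : (Fin K → Bool) → ℝ) (X : Finset (Fin K)) : ℝ :=
  margAt p X (fun _ => true)

/-- Empirical entropy of the marginal of `q` on the itemset `X`. -/
noncomputable def entX {K : ℕ} (q : (Fin K → Bool) → ℝ) (X : Finset (Fin K)) : ℝ :=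
  -∑ v : {i // i ∈ X} → Bool,
    (∑ w : Fin K → Bool, if ∀ i : {i // i ∈ X}, w i.1 = v i then q w else 0) *
      Real.log (∑ w : Fin K → Bool, if ∀ i : {i // i ∈ X}, w i.1 = v i then q w else 0)

/-- Entropy of a distribution on the full space. -/
noncomputable def entDist {K : ℕ} (p : (Fin K → Bool) → ℝ) : ℝ :=
  -∑ v : Fin K → Bool, p v * Real.log (p v)

def DownwardClosed {K : ℕ} (𝒢 : Finset (Finset (Fin K))) : Prop :=
  ∀ X ∈ 𝒢, ∀ Y ⊆ X, Y ∈ 𝒢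

def Covers {K : ℕ} (𝒢 : Finset (Finset (Fin K))) : Prop :=
  ∀ a : Fin K, ∃ X ∈ 𝒢, a ∈ X

/-- A junction tree (forest) over the family `𝒢`: an acyclic graph on the members of `𝒢`
whose edges join intersecting cliques, such that cliques sharing an attribute are connected,
and satisfying the running intersection property. -/
def IsJunctionTree {K : ℕ} (𝒢 : Finset (Finset (Fin K)))
    (G : SimpleGraph {C // C ∈ 𝒢}) : Prop :=
  G.IsAcyclic ∧
  (∀ X Y, G.Adj X Y → (X.1 ∩ Y.1).Nonempty) ∧
  (∀ (X Y : {C // C ∈ 𝒢}) (a : Fin K), a ∈ X.1 → a ∈ Y.1 → G.Reachable X Y) ∧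
  (∀ (X Y : {C // C ∈ 𝒢}) (a : Fin K), a ∈ X.1 → a ∈ Y.1 →
    ∀ w : G.Walk X Y, w.IsPath → ∀ Z ∈ w.support, a ∈ Z.1)

def Decomposable {K : ℕ} (𝒢 : Finset (Finset (Fin K))) : Prop :=
  ∃ G : SimpleGraph {C // C ∈ 𝒢}, IsJunctionTree 𝒢 G

noncomputable def sepEnt {K : ℕ} (q : (Fin K → Bool) → ℝ) {𝒢 : Finset (Finset (Fin K))}
    (e : Sym2 {C // C ∈ 𝒢}) : ℝ :=
  Sym2.lift ⟨fun X Y => entX q (X.1 ∩ Y.1), fun X Y => congrArg (entX q) (Finset.inter_comm _ _)⟩ e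

/-- Entropy of a junction tree: sum over cliques minus sum over separators. -/
noncomputable def treeEnt {K : ℕ} (q : (Fin K → Bool) → ℝ) (𝒢 : Finset (Finset (Fin K)))
    (G : SimpleGraph {C // C ∈ 𝒢}) : ℝ :=
  (∑ C : {C // C ∈ 𝒢}, entX q C.1) - ∑ e ∈ G.edgeFinset, sepEnt q e

/-- The junction tree distribution: product of clique marginals over product of
separator marginals. -/
noncomputable def jtDist {K : ℕ} (q : (Fin K → Bool) → ℝ) (𝒢 : Finset (Finset (Fin K)))
    (G : SimpleGraph {C // C ∈ 𝒢}) (v : Fin K → Bool) : ℝ :=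
  (∏ C : {C // C ∈ 𝒢}, margAt q C.1 v) /
    ∏ e ∈ G.edgeFinset,
      Sym2.lift ⟨fun X Y => margAt q (X.1 ∩ Y.1) v,
        fun X Y => congrArg (fun S => margAt q S v) (Finset.inter_comm _ _)⟩ e

/-- A function on full binary vectors that only depends on the attributes in `C`. -/
def DependsOnlyOn {K : ℕ} (p : (Fin K → Bool) → ℝ) (C : Finset (Fin K)) : Prop :=
  ∀ v w, (∀ i ∈ C, v i = w i) → p v = p w

/-- Empirical distribution of a dataset of `N` transactions. -/
noncomputable def empirical {K N : ℕ} (D : Fin N → (Fin K → Bool)) :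
    (Fin K → Bool) → ℝ :=
  fun v => ((Finset.univ.filter (fun t => D t = v)).card : ℝ) / N

/-!
Peel off a leaf `ℓ` of the junction tree, with neighbour `j`. By the running intersection
property every attribute that `C ℓ` shares with another clique lies in the separator
`C ℓ ∩ C j`. By induction the remaining cliques have a joint distribution `p`, and `p` agrees with
`p_ℓ` on the separator because `p_j` does; drawing the attributes of `C ℓ \ C j` from `p_ℓ`
conditioned on the separator then extends `p` without disturbing its other clique marginals.
-/

open Finset

section Marginals

variable {K : ℕ}

lemma margAt_nonneg {p : (Fin K → Bool) → ℝ} (hp : ∀ v, 0 ≤ p v) (X : Finset (Fin K))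
    (v : Fin K → Bool) : 0 ≤ margAt p X v :=
  sum_nonneg fun w _ => by split_ifs <;> simp [hp w]

lemma margAt_empty (p : (Fin K → Bool) → ℝ) (v : Fin K → Bool) :
    margAt p ∅ v = ∑ w, p w := by
  simp [margAt]

lemma margAt_le_margAt_of_subset {p : (Fin K → Bool) → ℝ} (hp : ∀ v, 0 ≤ p v)
    {S X : Finset (Fin K)} (hSX : S ⊆ X) (v : Fin K → Bool) : margAt p X v ≤ margAt p S v :=
  sum_le_sum fun w _ => by
    split_ifs with hX hS hS
    · exact le_rfl
    · exact absurd (fun i hi => hX i (hSX hi)) hS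
    · exact hp w
    · exact le_rfl

lemma dependsOnlyOn_margAt (p : (Fin K → Bool) → ℝ) (X : Finset (Fin K)) :
    DependsOnlyOn (margAt p X) X := fun v w h =>
  sum_congr rfl fun u _ => if_congr (forall₂_congr fun i hi => by rw [h i hi]) rfl rfl

lemma DependsOnlyOn.mono {f : (Fin K → Bool) → ℝ} {X Y : Finset (Fin K)}
    (hf : DependsOnlyOn f X) (hXY : X ⊆ Y) : DependsOnlyOn f Y :=
  fun v w h => hf v w fun i hi => h i (hXY hi)

lemma DependsOnlyOn.mul {f g : (Fin K → Bool) → ℝ} {X : Finset (Fin K)}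
    (hf : DependsOnlyOn f X) (hg : DependsOnlyOn g X) : DependsOnlyOn (fun w => f w * g w) X :=
  fun v w h => congrArg₂ (· * ·) (hf v w h) (hg v w h)

lemma DependsOnlyOn.inv {f : (Fin K → Bool) → ℝ} {X : Finset (Fin K)}
    (hf : DependsOnlyOn f X) : DependsOnlyOn (fun w => (f w)⁻¹) X :=
  fun v w h => congrArg Inv.inv (hf v w h)

lemma margAt_mul_of_dependsOnlyOn {f : (Fin K → Bool) → ℝ} {X : Finset (Fin K)}
    (hf : DependsOnlyOn f X) (g : (Fin K → Bool) → ℝ) (v : Fin K → Bool) :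
    margAt (fun w => f w * g w) X v = f v * margAt g X v := by
  rw [margAt, margAt, mul_sum]
  refine sum_congr rfl fun w _ => ?_
  split_ifs with h
  · rw [hf w v h]
  · rw [mul_zero]

lemma agree_and_agree_iff {X Y : Finset (Fin K)} (hXY : Xᶜ ⊆ Y) (u v w : Fin K → Bool) :
    ((∀ i ∈ X, u i = v i) ∧ ∀ i ∈ Y, w i = u i) ↔
      (∀ i ∈ X ∩ Y, w i = v i) ∧ u = X.piecewise v w := by
  constructor
  · rintro ⟨hX, hY⟩
    refine ⟨fun i hi => (hY i (mem_inter.1 hi).2).trans (hX i (mem_inter.1 hi).1), ?_⟩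
    funext i
    by_cases hi : i ∈ X
    · rw [piecewise_eq_of_mem _ _ _ hi, hX i hi]
    · rw [piecewise_eq_of_notMem _ _ _ hi, hY i (hXY (mem_compl.2 hi))]
  · rintro ⟨hXY, rfl⟩
    refine ⟨fun i hi => piecewise_eq_of_mem _ _ _ hi, fun i hi => ?_⟩
    by_cases hiX : i ∈ X
    · rw [piecewise_eq_of_mem _ _ _ hiX, hXY i (mem_inter.2 ⟨hiX, hi⟩)]
    · rw [piecewise_eq_of_notMem _ _ _ hiX]

lemma margAt_margAt (p : (Fin K → Bool) → ℝ) {X Y : Finset (Fin K)} (hXY : Xᶜ ⊆ Y)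
    (v : Fin K → Bool) : margAt (margAt p Y) X v = margAt p (X ∩ Y) v := by
  unfold margAt
  simp_rw [ite_sum_zero, ← ite_and]
  rw [sum_comm]
  refine sum_congr rfl fun w _ => ?_
  simp [agree_and_agree_iff hXY, ite_and]

lemma margAt_eq_of_subset {p q : (Fin K → Bool) → ℝ} {X Y : Finset (Fin K)}
    (h : ∀ v, margAt p X v = margAt q X v) (hYX : Y ⊆ X) (v : Fin K → Bool) :
    margAt p Y v = margAt q Y v := by
  have hcover : (Y ∪ Xᶜ)ᶜ ⊆ X := by simp [compl_union]
  have hinter : (Y ∪ Xᶜ) ∩ X = Y := by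
    ext i
    have := @hYX i
    simp only [mem_inter, mem_union, mem_compl]
    tauto
  rw [← hinter, ← margAt_margAt p hcover, ← margAt_margAt q hcover, funext h]

/-- `r = p_X · q_Y / q_{X ∩ Y}` draws the `X`-coordinates from `p` and the others from `q`
conditioned on `X ∩ Y`. Where the denominator vanishes so does `p_X`, by the agreement, so the
junk value of the division is harmless. -/
theorem exists_isDistribution_margAt_eq_of_margAt_inter_eq {p q : (Fin K → Bool) → ℝ}
    (hp : IsDistribution p) (hq : IsDistribution q) {X Y : Finset (Fin K)} (hXY : Xᶜ ⊆ Y)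
    (hagree : ∀ v, margAt p (X ∩ Y) v = margAt q (X ∩ Y) v) :
    ∃ r : (Fin K → Bool) → ℝ, IsDistribution r ∧
      (∀ v, margAt r X v = margAt p X v) ∧ ∀ v, margAt r Y v = margAt q Y v := by
  set s := margAt q (X ∩ Y)
  have hYX : Yᶜ ⊆ X := compl_le_iff_compl_le.1 hXY
  have hp_zero : ∀ v, s v = 0 → margAt p X v = 0 := fun v hv =>
    le_antisymm ((margAt_le_margAt_of_subset hp.1 inter_subset_left v).trans_eq (hagree v ▸ hv))
      (margAt_nonneg hp.1 X v)
  have hq_zero : ∀ v, s v = 0 → margAt q Y v = 0 := fun v hv =>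
    le_antisymm ((margAt_le_margAt_of_subset hq.1 inter_subset_right v).trans_eq hv)
      (margAt_nonneg hq.1 Y v)
  have hs : DependsOnlyOn s (X ∩ Y) := dependsOnlyOn_margAt q _
  have hmargX : ∀ v, margAt (fun w => margAt p X w * (s w)⁻¹ * margAt q Y w) X v
      = margAt p X v := by
    intro v
    rw [margAt_mul_of_dependsOnlyOn ((dependsOnlyOn_margAt p X).mul
      (hs.mono inter_subset_left).inv), margAt_margAt q hXY, mul_assoc]
    by_cases h0 : s v = 0
    · rw [hp_zero v h0, zero_mul]
    · rw [inv_mul_cancel₀ h0, mul_one]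
  refine ⟨fun w => margAt p X w * (s w)⁻¹ * margAt q Y w,
    ⟨fun w => mul_nonneg (mul_nonneg (margAt_nonneg hp.1 X w)
      (inv_nonneg.2 (margAt_nonneg hq.1 _ w))) (margAt_nonneg hq.1 Y w), ?_⟩, hmargX, fun v => ?_⟩
  · rw [← margAt_empty _ (fun _ => true), margAt_eq_of_subset hmargX (empty_subset X),
      margAt_empty, hp.2]
  · simp_rw [mul_assoc, mul_comm (margAt p X _)]
    rw [margAt_mul_of_dependsOnlyOn ((hs.mono inter_subset_right).inv.mul
      (dependsOnlyOn_margAt q Y)), margAt_margAt p hYX, inter_comm, hagree, mul_comm]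
    by_cases h0 : s v = 0
    · rw [hq_zero v h0, h0, zero_mul]
    · rw [mul_inv_cancel_left₀ h0]

lemma exists_isDistribution_margAt_eq_of_subset_of_margAt_eq {p q : (Fin K → Bool) → ℝ}
    (hp : IsDistribution p) (hq : IsDistribution q) {S Y : Finset (Fin K)} (hSY : S ⊆ Y)
    (hS : ∀ v, margAt p S v = margAt q S v) :
    ∃ r : (Fin K → Bool) → ℝ, IsDistribution r ∧
      (∀ X, X ∩ Y ⊆ S → ∀ v, margAt r X v = margAt p X v) ∧
      ∀ v, margAt r Y v = margAt q Y v := by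
  have hcover : ((Y \ S)ᶜ)ᶜ ⊆ Y := by simp [sdiff_subset]
  have hinter : (Y \ S)ᶜ ∩ Y = S := by
    ext a
    have := @hSY a
    simp only [mem_inter, mem_compl, mem_sdiff]
    tauto
  obtain ⟨r, hr, hr_rest, hrY⟩ :=
    exists_isDistribution_margAt_eq_of_margAt_inter_eq hp hq hcover (by rwa [hinter])
  refine ⟨r, hr, fun X hX v => margAt_eq_of_subset hr_rest (fun a ha => ?_) v, hrY⟩
  simp only [mem_compl, mem_sdiff, not_and, not_not]
  exact fun haY => hX (mem_inter.2 ⟨ha, haY⟩)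

end Marginals

namespace SimpleGraph

variable {ι : Type*} {G : SimpleGraph ι}

/-- In a forest: a set of vertices meeting every tree in a subtree. -/
def IsPathConvex (G : SimpleGraph ι) (A : Finset ι) : Prop :=
  ∀ ⦃x y : ι⦄ (w : G.Walk x y), w.IsPath → x ∈ A → y ∈ A → ∀ z ∈ w.support, z ∈ A

lemma isPathConvex_univ [Fintype ι] : G.IsPathConvex univ :=
  fun _ _ _ _ _ _ z _ => mem_univ z

/-- A vertex at maximal distance from `x` within (the part reachable from `x` of) `A` has at most
one neighbour in `A`: every such neighbour is the penultimate vertex of the geodesic from `x`. -/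
lemma IsAcyclic.exists_subsingleton_adj_mem (hG : G.IsAcyclic) {A : Finset ι} (hA : A.Nonempty) :
    ∃ ℓ ∈ A, {x | x ∈ A ∧ G.Adj ℓ x}.Subsingleton := by
  obtain ⟨x, hx⟩ := hA
  obtain ⟨y, hy, hmax⟩ := (A.filter (G.Reachable x)).exists_max_image (G.dist x)
    ⟨x, mem_filter.2 ⟨hx, Reachable.refl x⟩⟩
  obtain ⟨hyA, hxy⟩ := mem_filter.1 hy
  obtain ⟨p, hp, hp_len⟩ := hxy.exists_path_of_dist
  suffices h : ∀ z ∈ A, G.Adj y z → z = p.penultimate from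
    ⟨y, hyA, fun z hz z' hz' => (h z hz.1 hz.2).trans (h z' hz'.1 hz'.2).symm⟩
  intro z hzA hyz
  have hxz : G.Reachable x z := hxy.trans hyz.reachable
  have hdist : G.dist x y = G.dist x z + 1 :=
    (hG.dist_eq_dist_add_one_of_adj_of_reachable x hyz hxy).resolve_right fun h =>
      by have := hmax z (mem_filter.2 ⟨hzA, hxz⟩); omega
  obtain ⟨q, hq, hq_len⟩ := hxz.exists_path_of_dist
  have hy_q : y ∉ q.support := fun hy_q => by
    have := (dist_le (q.takeUntil y hy_q)).trans (q.length_takeUntil_le_length hy_q)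
    omega
  exact hG.eq_penultimate_of_adj_end hp hyz
    (hG.mem_support_of_ne_mem_support_of_adj_of_isPath hp hq hyz hy_q)

/-- An interior vertex of a path has two distinct neighbours on it. -/
lemma IsPathConvex.erase {A : Finset ι} (hA : G.IsPathConvex A) {ℓ : ι}
    (hℓ : {x | x ∈ A ∧ G.Adj ℓ x}.Subsingleton) : G.IsPathConvex (A.erase ℓ) := by
  intro x y w hw hx hy z hz
  have hzA := hA w hw (mem_of_mem_erase hx) (mem_of_mem_erase hy) z hz
  refine mem_erase.2 ⟨?_, hzA⟩
  rintro rfl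
  obtain ⟨n, rfl, hn⟩ := Walk.mem_support_iff_exists_getVert.1 hz
  have hn0 : n ≠ 0 := by rintro rfl; exact ne_of_mem_erase hx w.getVert_zero.symm
  have hn_len : n ≠ w.length := by rintro rfl; exact ne_of_mem_erase hy w.getVert_length.symm
  have hprev : G.Adj (w.getVert n) (w.getVert (n - 1)) := by
    have := w.adj_getVert_succ (i := n - 1) (by omega)
    rwa [Nat.sub_add_cancel (Nat.one_le_iff_ne_zero.2 hn0), G.adj_comm] at this
  have hnext : G.Adj (w.getVert n) (w.getVert (n + 1)) := w.adj_getVert_succ (by omega)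
  have hmem : ∀ m, w.getVert m ∈ A := fun m =>
    hA w hw (mem_of_mem_erase hx) (mem_of_mem_erase hy) _ (w.getVert_mem_support m)
  have := hw.getVert_injOn (by simp only [Set.mem_ofPred_eq]; omega)
    (by simp only [Set.mem_ofPred_eq]; omega) (hℓ ⟨hmem _, hprev⟩ ⟨hmem _, hnext⟩)
  omega

variable {α : Type*} {C : ι → Finset α}

lemma IsPathConvex.exists_adj_mem_of_mem_of_mem {A : Finset ι}
    (hA : G.IsPathConvex A)
    (hreach : ∀ (i j : ι) (a : α), a ∈ C i → a ∈ C j → G.Reachable i j)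
    (hRIP : ∀ (i j : ι) (a : α), a ∈ C i → a ∈ C j →
      ∀ w : G.Walk i j, w.IsPath → ∀ z ∈ w.support, a ∈ C z)
    {ℓ k : ι} (hℓ : ℓ ∈ A) (hk : k ∈ A) (hℓk : ℓ ≠ k) {a : α} (haℓ : a ∈ C ℓ) (hak : a ∈ C k) :
    ∃ j ∈ A, G.Adj ℓ j ∧ a ∈ C j := by
  obtain ⟨w, hw⟩ := (hreach ℓ k a haℓ hak).exists_isPath
  have hsnd : w.snd ∈ w.support := w.getVert_mem_support 1
  exact ⟨w.snd, hA w hw hℓ hk _ hsnd, w.adj_snd (Walk.not_nil_of_ne hℓk),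
    hRIP ℓ k a haℓ hak w hw _ hsnd⟩

lemma IsPathConvex.disjoint_or_exists_adj_inter_subset [DecidableEq α] {A : Finset ι}
    (hA : G.IsPathConvex A)
    (hreach : ∀ (i j : ι) (a : α), a ∈ C i → a ∈ C j → G.Reachable i j)
    (hRIP : ∀ (i j : ι) (a : α), a ∈ C i → a ∈ C j →
      ∀ w : G.Walk i j, w.IsPath → ∀ z ∈ w.support, a ∈ C z)
    {ℓ : ι} (hℓ : ℓ ∈ A) (hleaf : {x | x ∈ A ∧ G.Adj ℓ x}.Subsingleton) :
    (∀ k ∈ A.erase ℓ, Disjoint (C k) (C ℓ)) ∨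
      ∃ j ∈ A.erase ℓ, G.Adj ℓ j ∧ ∀ k ∈ A.erase ℓ, C k ∩ C ℓ ⊆ C j := by
  have hnbr : ∀ k ∈ A.erase ℓ, ∀ a ∈ C k, a ∈ C ℓ → ∃ j ∈ A, G.Adj ℓ j ∧ a ∈ C j :=
    fun k hk a hak haℓ => hA.exists_adj_mem_of_mem_of_mem hreach hRIP hℓ (mem_of_mem_erase hk)
      (ne_of_mem_erase hk).symm haℓ hak
  by_cases hj : ∃ j ∈ A.erase ℓ, G.Adj ℓ j
  · obtain ⟨j, hj, hℓj⟩ := hj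
    refine Or.inr ⟨j, hj, hℓj, fun k hk a ha => ?_⟩
    obtain ⟨t, ht, hℓt, hat⟩ := hnbr k hk a (mem_inter.1 ha).1 (mem_inter.1 ha).2
    rwa [hleaf ⟨ht, hℓt⟩ ⟨mem_of_mem_erase hj, hℓj⟩] at hat
  · refine Or.inl fun k hk => Finset.disjoint_left.2 fun a hak haℓ => ?_
    obtain ⟨t, ht, hℓt, -⟩ := hnbr k hk a hak haℓ
    apply hj
    exact ⟨t, mem_erase.2 ⟨(G.ne_of_adj hℓt).symm, ht⟩, hℓt⟩

end SimpleGraph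

theorem SimpleGraph.IsPathConvex.exists_isDistribution_margAt_eq {K : ℕ} {ι : Type*}
    {G : SimpleGraph ι} {C : ι → Finset (Fin K)} (hac : G.IsAcyclic)
    (hreach : ∀ (i j : ι) (a : Fin K), a ∈ C i → a ∈ C j → G.Reachable i j)
    (hRIP : ∀ (i j : ι) (a : Fin K), a ∈ C i → a ∈ C j →
      ∀ w : G.Walk i j, w.IsPath → ∀ z ∈ w.support, a ∈ C z)
    {pfam : ι → (Fin K → Bool) → ℝ} (hd : ∀ i, IsDistribution (pfam i))
    (hag : ∀ i j, G.Adj i j → ∀ v,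
      margAt (pfam i) (C i ∩ C j) v = margAt (pfam j) (C i ∩ C j) v)
    {A : Finset ι} (hA : G.IsPathConvex A) :
    ∃ p : (Fin K → Bool) → ℝ, IsDistribution p ∧
      ∀ i ∈ A, ∀ v, margAt p (C i) v = margAt (pfam i) (C i) v := by
  induction A using Finset.strongInduction with | H A ih =>
  rcases A.eq_empty_or_nonempty with rfl | hne
  · exact ⟨fun w => if w = fun _ => false then 1 else 0,
      ⟨fun _ => ite_nonneg zero_le_one le_rfl, by simp⟩, by simp⟩
  obtain ⟨ℓ, hℓ, hleaf⟩ := hac.exists_subsingleton_adj_mem hne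
  obtain ⟨p, hp, hmarg⟩ := ih _ (erase_ssubset hℓ) (hA.erase hleaf)
  obtain ⟨S, hSℓ, hsep, hS⟩ : ∃ S ⊆ C ℓ, (∀ k ∈ A.erase ℓ, C k ∩ C ℓ ⊆ S) ∧
      ∀ v, margAt p S v = margAt (pfam ℓ) S v := by
    rcases hA.disjoint_or_exists_adj_inter_subset hreach hRIP hℓ hleaf with
      hdisj | ⟨j, hj, hℓj, hsub⟩
    · refine ⟨∅, empty_subset _, fun k hk => (disjoint_iff_inter_eq_empty.1 (hdisj k hk)).le,
        fun v => ?_⟩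
      rw [margAt_empty, margAt_empty, hp.2, (hd ℓ).2]
    · refine ⟨C ℓ ∩ C j, inter_subset_left, fun k hk => subset_inter inter_subset_right
        (hsub k hk), fun v => ?_⟩
      rw [margAt_eq_of_subset (hmarg j hj) inter_subset_right, hag ℓ j hℓj]
  obtain ⟨r, hr, hr_rest, hrℓ⟩ := exists_isDistribution_margAt_eq_of_subset_of_margAt_eq hp
    (hd ℓ) hSℓ hS
  refine ⟨r, hr, fun i hi v => ?_⟩
  rcases eq_or_ne i ℓ with rfl | hiℓ
  · exact hrℓ v
  · have hi' := mem_erase.2 ⟨hiℓ, hi⟩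
    rw [hr_rest (C i) (hsep i hi') v, hmarg i hi']

/-- Global consistency: clique-local distributions that agree on the
separators of every junction tree edge extend to a joint distribution with those
marginals. -/
theorem gluing_tree {K : ℕ} (𝒢 : Finset (Finset (Fin K)))
    (G : SimpleGraph {C // C ∈ 𝒢}) (hG : IsJunctionTree 𝒢 G)
    (pfam : {C // C ∈ 𝒢} → (Fin K → Bool) → ℝ)
    (hdist : ∀ C, IsDistribution (pfam C) ∧ DependsOnlyOn (pfam C) C.1)
    (hagree : ∀ C₁ C₂, G.Adj C₁ C₂ →
      ∀ v, margAt (pfam C₁) (C₁.1 ∩ C₂.1) v = margAt (pfam C₂) (C₁.1 ∩ C₂.1) v) :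
    ∃ p : (Fin K → Bool) → ℝ, IsDistribution p ∧
      ∀ C : {C // C ∈ 𝒢}, ∀ v, margAt p C.1 v = margAt (pfam C) C.1 v := by
  obtain ⟨hac, -, hreach, hRIP⟩ := hG
  obtain ⟨p, hp, hmarg⟩ := SimpleGraph.isPathConvex_univ.exists_isDistribution_margAt_eq hac
    hreach hRIP (fun C => (hdist C).1) hagree
  exact ⟨p, hp, fun C => hmarg C (mem_univ C)⟩
end

section
/- Let T be a junction tree and suppose a new clique V of size n+1 is added between cliques X and Y (each of size n, |X ∩ Y| = n−1) whenever X and Y are (n−1)-connected, creating a cycle that is then broken by removing an edge with separator of size n−1 on the path between X and Y. The resulting graph is again a junction tree (a tree satisfying the running intersection property). -/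
open scoped Classical

/-!
Deleting the edge `d` of the forest `G` separates `X` from `Y`, since `d` lies on the path `w`
between them; so the new clique `X ∪ Y`, joined to `X` and to `Y`, closes no cycle. In a forest
the unique path between two cliques is the bypass of any walk between them, so the running
intersection property only asks that two cliques containing an attribute `t` be joined by some
walk through cliques containing `t`. Walks of `G` carry over unchanged, except across `d`. By the
running intersection property along `w`, the separator of `d` contains `X ∩ Y`, and the
cardinality hypotheses make it equal; so an attribute crossing `d` lies in every clique of `w`
and in `X ∪ Y`, and the detour along `w` through `X`, `X ∪ Y` and `Y` replaces `d`.
-/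

namespace SimpleGraph

variable {V W γ : Type*} {G : SimpleGraph V} {G' : SimpleGraph W}

theorem Reachable.eq_of_forall_adj (c : V → γ) (hc : ∀ u v, G.Adj u v → c u = c v) {u v : V}
    (h : G.Reachable u v) : c u = c v := by
  obtain ⟨p⟩ := h
  induction p with
  | nil => rfl
  | cons hadj _ ih => exact (hc _ _ hadj).trans ih

theorem extend_eq_of_map_adj (f : V ↪ W) {g : V → γ} (hg : ∀ u v, G.Adj u v → g u = g v)
    (d : W → γ) {A B : W} (h : (G.map f).Adj A B) :
    Function.extend f g d A = Function.extend f g d B := by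
  obtain ⟨u, v, huv, rfl, rfl⟩ := (map_adj f G A B).mp h
  simp only [f.injective.extend_apply, hg u v huv]

theorem Reachable.of_map (f : V ↪ W) {u v : V} (h : (G.map f).Reachable (f u) (f v)) :
    G.Reachable u v := by
  have := h.eq_of_forall_adj _
    (fun _ _ => extend_eq_of_map_adj f (fun _ _ hadj => ConnectedComponent.sound hadj.reachable)
      (fun _ => G.connectedComponentMk u))
  simpa [f.injective.extend_apply, ConnectedComponent.eq] using this

theorem map_deleteEdges_le (f : V ↪ W) (u v : V) :
    (G.map f).deleteEdges {s(f u, f v)} ≤ (G.deleteEdges {s(u, v)}).map f := by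
  rintro _ _ ⟨hadj, hne⟩
  obtain ⟨a, b, hab, rfl, rfl⟩ := (map_adj f G _ _).mp hadj
  refine (map_adj f _ _ _).mpr ⟨a, b, ⟨hab, fun h => hne ?_⟩, rfl, rfl⟩
  simp_all

theorem IsAcyclic.map (f : V ↪ W) (hG : G.IsAcyclic) : (G.map f).IsAcyclic := by
  rw [isAcyclic_iff_forall_adj_isBridge] at hG ⊢
  intro A B hAB hreach
  obtain ⟨u, v, huv, rfl, rfl⟩ := (map_adj f G A B).mp hAB
  exact hG huv ((hreach.mono (map_deleteEdges_le f u v)).of_map f)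

theorem IsAcyclic.map_sup_edge_sup_edge (f : V ↪ W) (hG : G.IsAcyclic) {w : W}
    (hw : w ∉ Set.range f) {x y : V} (hxy : ¬G.Reachable x y) :
    (G.map f ⊔ edge w (f x) ⊔ edge w (f y)).IsAcyclic := by
  have hw' : ¬∃ a, f a = w := hw
  have hx : ¬(G.map f).Reachable w (f x) := fun h => by
    simpa [Function.extend_apply' _ _ _ hw', f.injective.extend_apply] using
      h.eq_of_forall_adj (Function.extend f (fun _ => True) fun _ => False)
        (fun _ _ => extend_eq_of_map_adj f (fun _ _ _ => rfl) _)
  -- Label `f a` by the component of `a` and `w` by that of `x`: the labels are constant along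
  -- edges, but differ at `w` and `f y`.
  have hy : ¬(G.map f ⊔ edge w (f x)).Reachable w (f y) := fun h => by
    refine hxy (ConnectedComponent.exact ?_)
    have := h.eq_of_forall_adj
      (Function.extend f G.connectedComponentMk fun _ => G.connectedComponentMk x) ?_
    · simpa [Function.extend_apply' _ _ _ hw', f.injective.extend_apply] using this
    rintro A B (hAB | hAB)
    · exact extend_eq_of_map_adj f (fun _ _ hadj => ConnectedComponent.sound hadj.reachable) _
        hAB
    · obtain ⟨⟨rfl, rfl⟩ | ⟨rfl, rfl⟩, -⟩ := (edge_adj _ _ _ _).mp hAB <;>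
        simp [Function.extend_apply' _ _ _ hw', f.injective.extend_apply]
  exact (hG.map f |>.sup_edge_of_not_reachable hx).sup_edge_of_not_reachable hy

theorem IsAcyclic.support_subset_of_isPath (hG : G.IsAcyclic) {u v : V} {p : G.Walk u v}
    (hp : p.IsPath) (q : G.Walk u v) : p.support ⊆ q.support := by
  have : p = q.bypass :=
    congrArg Subtype.val ((hG.subsingleton_path u v).elim ⟨p, hp⟩ ⟨_, q.bypass_isPath⟩)
  exact this ▸ q.support_bypass_subset_support

theorem Walk.IsPath.exists_split_of_mem_darts {u v : V} {w : G.Walk u v} (hw : w.IsPath)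
    {d : G.Dart} (hd : d ∈ w.darts) :
    ∃ (p : G.Walk u d.fst) (q : G.Walk d.snd v), d.edge ∉ p.edges ∧ d.edge ∉ q.edges ∧
      p.support ⊆ w.support ∧ q.support ⊆ w.support := by
  obtain ⟨p, q, rfl⟩ := (Walk.isSubwalk_toWalk_adj_iff_mem_darts w).mpr hd
  have hnodup := hw.isTrail.edges_nodup
  simp only [Walk.edges_append, Adj.toWalk, Walk.edges_cons, Walk.edges_nil] at hnodup
  simp only [List.nodup_append, List.mem_append, List.mem_singleton] at hnodup
  refine ⟨p, q, fun h => hnodup.1.2.2 _ h _ rfl rfl, fun h => hnodup.2.2 _ (.inr rfl) _ h rfl,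
    fun z hz => by simp [hz], fun z hz => by simp [hz]⟩

def ReachableWithin (G : SimpleGraph V) (P : V → Prop) (u v : V) : Prop :=
  ∃ p : G.Walk u v, ∀ z ∈ p.support, P z

variable {P : V → Prop} {u v w : V}

theorem ReachableWithin.refl (h : P u) : G.ReachableWithin P u u :=
  ⟨.nil, by simpa using h⟩

theorem Adj.reachableWithin (h : G.Adj u v) (hu : P u) (hv : P v) : G.ReachableWithin P u v :=
  ⟨h.toWalk, by simp [hu, hv]⟩

theorem ReachableWithin.symm (h : G.ReachableWithin P u v) : G.ReachableWithin P v u :=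
  let ⟨p, hp⟩ := h
  ⟨p.reverse, by simpa using hp⟩

theorem ReachableWithin.trans (huv : G.ReachableWithin P u v) (hvw : G.ReachableWithin P v w) :
    G.ReachableWithin P u w :=
  let ⟨p, hp⟩ := huv
  let ⟨q, hq⟩ := hvw
  ⟨p.append q, fun z hz => (Walk.mem_support_append_iff p q).mp hz |>.elim (hp z) (hq z)⟩

theorem ReachableWithin.of_forall_adj (f : V → W) {Q : W → Prop} (hPQ : ∀ v, P v → Q (f v))
    (hadj : ∀ a b, G.Adj a b → P a → P b → G'.ReachableWithin Q (f a) (f b))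
    (h : G.ReachableWithin P u v) : G'.ReachableWithin Q (f u) (f v) := by
  obtain ⟨p, hp⟩ := h
  induction p with
  | nil => exact .refl (hPQ _ (hp _ (by simp)))
  | cons hab p ih =>
    simp only [Walk.support_cons, List.mem_cons, forall_eq_or_imp] at hp
    exact (hadj _ _ hab hp.1 (hp.2 _ p.start_mem_support)).trans (ih hp.2)

theorem ReachableWithin.reachable (h : G.ReachableWithin P u v) : G.Reachable u v :=
  let ⟨p, _⟩ := h
  ⟨p⟩

theorem IsAcyclic.not_reachable_deleteEdges_of_mem_darts (hG : G.IsAcyclic) {u v : V}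
    {w : G.Walk u v} (hw : w.IsPath) {d : G.Dart} (hd : d ∈ w.darts) :
    ¬(G.deleteEdges {d.edge}).Reachable u v := fun h => by
  obtain ⟨p, q, hp, hq, -, -⟩ := hw.exists_split_of_mem_darts hd
  exact isAcyclic_iff_forall_adj_isBridge.mp hG d.adj <|
    ((p.toDeleteEdge _ hp).reverse.reachable.trans h).trans (q.toDeleteEdge _ hq).reachable.symm

end SimpleGraph

open SimpleGraph

section JunctionTree

variable {K : ℕ} {𝒢 : Finset (Finset (Fin K))} {G : SimpleGraph {C // C ∈ 𝒢}}

theorem isJunctionTree_iff :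
    IsJunctionTree 𝒢 G ↔ G.IsAcyclic ∧ (∀ X Y, G.Adj X Y → (X.1 ∩ Y.1).Nonempty) ∧
      ∀ (X Y : {C // C ∈ 𝒢}) (a : Fin K), a ∈ X.1 → a ∈ Y.1 →
        G.ReachableWithin (a ∈ ·.1) X Y := by
  constructor
  · rintro ⟨hac, hint, hreach, hrip⟩
    refine ⟨hac, hint, fun X Y a hX hY => ?_⟩
    obtain ⟨p⟩ := hreach X Y a hX hY
    exact ⟨p.bypass, hrip X Y a hX hY _ p.bypass_isPath⟩
  · rintro ⟨hac, hint, hwithin⟩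
    refine ⟨hac, hint, fun X Y a hX hY => (hwithin X Y a hX hY).reachable, ?_⟩
    intro X Y a hX hY w hw Z hZ
    obtain ⟨q, hq⟩ := hwithin X Y a hX hY
    exact hq Z (hac.support_subset_of_isPath hw q hZ)

theorem IsJunctionTree.inter_subset_of_mem_support (hG : IsJunctionTree 𝒢 G)
    {X Y : {C // C ∈ 𝒢}} {w : G.Walk X Y} (hw : w.IsPath) {Z : {C // C ∈ 𝒢}}
    (hZ : Z ∈ w.support) : X.1 ∩ Y.1 ⊆ Z.1 := fun a ha =>
  hG.2.2.2 X Y a (Finset.mem_inter.mp ha).1 (Finset.mem_inter.mp ha).2 w hw Z hZ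

def insertEmbedding (V : Finset (Fin K)) (𝒢 : Finset (Finset (Fin K))) :
    {C // C ∈ 𝒢} ↪ {C // C ∈ insert V 𝒢} where
  toFun C := ⟨C.1, Finset.mem_insert_of_mem C.2⟩
  inj' _ _ h := Subtype.ext (congrArg (fun C : {C // C ∈ insert V 𝒢} => C.1) h)

@[simp]
theorem coe_insertEmbedding (V : Finset (Fin K)) (C : {C // C ∈ 𝒢}) :
    (insertEmbedding V 𝒢 C).1 = C.1 :=
  rfl

theorem insertEmbedding_cases {V : Finset (Fin K)} {motive : {C // C ∈ insert V 𝒢} → Prop}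
    (new : motive ⟨V, Finset.mem_insert_self V 𝒢⟩) (old : ∀ C, motive (insertEmbedding V 𝒢 C))
    (A : {C // C ∈ insert V 𝒢}) : motive A := by
  obtain ⟨A, hA⟩ := A
  rcases Finset.mem_insert.mp hA with rfl | hA
  exacts [new, old ⟨A, hA⟩]

def attachUnion (G : SimpleGraph {C // C ∈ 𝒢}) (e : Sym2 {C // C ∈ 𝒢}) (X Y : {C // C ∈ 𝒢}) :
    SimpleGraph {C // C ∈ insert (X.1 ∪ Y.1) 𝒢} :=
  let ι := insertEmbedding (X.1 ∪ Y.1) 𝒢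
  let V : {C // C ∈ insert (X.1 ∪ Y.1) 𝒢} := ⟨X.1 ∪ Y.1, Finset.mem_insert_self _ _⟩
  (G.deleteEdges {e}).map ι ⊔ edge V (ι X) ⊔ edge V (ι Y)

theorem attachUnion_eq_fromEdgeSet (e : Sym2 {C // C ∈ 𝒢}) (X Y : {C // C ∈ 𝒢}) :
    attachUnion G e X Y =
      fromEdgeSet
        (let ι : {C // C ∈ 𝒢} → {C // C ∈ insert (X.1 ∪ Y.1) 𝒢} :=
          fun C => ⟨C.1, Finset.mem_insert_of_mem C.2⟩
        let V' : {C // C ∈ insert (X.1 ∪ Y.1) 𝒢} := ⟨X.1 ∪ Y.1, Finset.mem_insert_self _ _⟩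
        (Sym2.map ι '' (G.edgeSet \ {e})) ∪ {s(V', ι X), s(V', ι Y)}) := by
  rw [attachUnion, ← fromEdgeSet_edgeSet ((G.deleteEdges {e}).map _), edgeSet_map,
    edgeSet_deleteEdges, edge, edge, ← fromEdgeSet_union, ← fromEdgeSet_union, Set.union_assoc,
    Set.singleton_union]
  rfl

section Attach

variable {X Y : {C // C ∈ 𝒢}}

theorem notMem_range_insertEmbedding {V : Finset (Fin K)} (hV : V ∉ 𝒢) :
    ⟨V, Finset.mem_insert_self V 𝒢⟩ ∉ Set.range (insertEmbedding V 𝒢) := by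
  rintro ⟨C, hC⟩
  obtain rfl : C.1 = V := congrArg Subtype.val hC
  exact hV C.2

theorem attachUnion_adj_of_adj {e : Sym2 {C // C ∈ 𝒢}} {a b : {C // C ∈ 𝒢}}
    (h : (G.deleteEdges {e}).Adj a b) :
    (attachUnion G e X Y).Adj (insertEmbedding _ 𝒢 a) (insertEmbedding _ 𝒢 b) :=
  .inl <| .inl <| (map_adj _ _ _ _).mpr ⟨a, b, h, rfl, rfl⟩

theorem attachUnion_adj_left (hV : X.1 ∪ Y.1 ∉ 𝒢) {e : Sym2 {C // C ∈ 𝒢}} :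
    (attachUnion G e X Y).Adj ⟨X.1 ∪ Y.1, Finset.mem_insert_self _ _⟩ (insertEmbedding _ 𝒢 X) :=
  .inl <| .inr <| (edge_adj _ _ _ _).mpr
    ⟨.inl ⟨rfl, rfl⟩, fun h => notMem_range_insertEmbedding hV ⟨X, h.symm⟩⟩

theorem attachUnion_adj_right (hV : X.1 ∪ Y.1 ∉ 𝒢) {e : Sym2 {C // C ∈ 𝒢}} :
    (attachUnion G e X Y).Adj ⟨X.1 ∪ Y.1, Finset.mem_insert_self _ _⟩ (insertEmbedding _ 𝒢 Y) :=
  .inr <| (edge_adj _ _ _ _).mpr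
    ⟨.inl ⟨rfl, rfl⟩, fun h => notMem_range_insertEmbedding hV ⟨Y, h.symm⟩⟩

theorem isAcyclic_attachUnion (hG : G.IsAcyclic) (hV : X.1 ∪ Y.1 ∉ 𝒢) {e : Sym2 {C // C ∈ 𝒢}}
    (hXY : ¬(G.deleteEdges {e}).Reachable X Y) : (attachUnion G e X Y).IsAcyclic :=
  (hG.anti (deleteEdges_le _)).map_sup_edge_sup_edge _ (notMem_range_insertEmbedding hV) hXY

theorem attachUnion_inter_nonempty_of_adj (hint : ∀ X Y, G.Adj X Y → (X.1 ∩ Y.1).Nonempty)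
    (hX : X.1.Nonempty) (hY : Y.1.Nonempty) {e : Sym2 {C // C ∈ 𝒢}}
    {A B : {C // C ∈ insert (X.1 ∪ Y.1) 𝒢}} (h : (attachUnion G e X Y).Adj A B) :
    (A.1 ∩ B.1).Nonempty := by
  rcases h with (h | h) | h
  · obtain ⟨a, b, hab, rfl, rfl⟩ := (map_adj _ _ _ _).mp h
    exact hint a b (deleteEdges_adj.mp hab).1
  · obtain ⟨⟨rfl, rfl⟩ | ⟨rfl, rfl⟩, -⟩ := (edge_adj _ _ _ _).mp h <;>
      simpa [Finset.inter_comm _ (X.1 ∪ Y.1)] using hX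
  · obtain ⟨⟨rfl, rfl⟩ | ⟨rfl, rfl⟩, -⟩ := (edge_adj _ _ _ _).mp h <;>
      simpa [Finset.inter_comm _ (X.1 ∪ Y.1)] using hY

theorem IsJunctionTree.reachableWithin_attachUnion_of_mem_inter (hG : IsJunctionTree 𝒢 G)
    (hV : X.1 ∪ Y.1 ∉ 𝒢) {w : G.Walk X Y} (hw : w.IsPath) {d : G.Dart} (hd : d ∈ w.darts)
    {t : Fin K} (ht : t ∈ X.1 ∩ Y.1) :
    (attachUnion G d.edge X Y).ReachableWithin (t ∈ ·.1)
      (insertEmbedding _ 𝒢 d.fst) (insertEmbedding _ 𝒢 d.snd) := by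
  obtain ⟨p, q, hp, hq, hps, hqs⟩ := hw.exists_split_of_mem_darts hd
  have hw_mem : ∀ z ∈ w.support, t ∈ z.1 := fun z hz => hG.inter_subset_of_mem_support hw hz ht
  have lift : ∀ {a b}, (G.deleteEdges {d.edge}).ReachableWithin (t ∈ ·.1) a b →
      (attachUnion G d.edge X Y).ReachableWithin (t ∈ ·.1)
        (insertEmbedding _ 𝒢 a) (insertEmbedding _ 𝒢 b) :=
    .of_forall_adj _ (fun _ h => h) fun _ _ hab ha hb =>
      (attachUnion_adj_of_adj hab).reachableWithin ha hb
  have hfst : (G.deleteEdges {d.edge}).ReachableWithin (t ∈ ·.1) d.fst X :=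
    ⟨(p.toDeleteEdge _ hp).reverse, by simpa using fun z hz => hw_mem z (hps hz)⟩
  have hsnd : (G.deleteEdges {d.edge}).ReachableWithin (t ∈ ·.1) Y d.snd :=
    ⟨(q.toDeleteEdge _ hq).reverse, by simpa using fun z hz => hw_mem z (hqs hz)⟩
  have htV : t ∈ X.1 ∪ Y.1 := Finset.mem_union_left _ (Finset.mem_inter.mp ht).1
  have hXY : (attachUnion G d.edge X Y).ReachableWithin (t ∈ ·.1)
      (insertEmbedding _ 𝒢 X) (insertEmbedding _ 𝒢 Y) :=
    ((attachUnion_adj_left hV).reachableWithin htV (Finset.mem_inter.mp ht).1).symm.trans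
      ((attachUnion_adj_right hV).reachableWithin htV (Finset.mem_inter.mp ht).2)
  exact (lift hfst).trans (hXY.trans (lift hsnd))

theorem IsJunctionTree.reachableWithin_attachUnion (hG : IsJunctionTree 𝒢 G)
    (hV : X.1 ∪ Y.1 ∉ 𝒢) {w : G.Walk X Y} (hw : w.IsPath) {d : G.Dart} (hd : d ∈ w.darts)
    (hsep : d.fst.1 ∩ d.snd.1 ⊆ X.1 ∩ Y.1) {t : Fin K} {A B : {C // C ∈ 𝒢}}
    (hA : t ∈ A.1) (hB : t ∈ B.1) :
    (attachUnion G d.edge X Y).ReachableWithin (t ∈ ·.1)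
      (insertEmbedding _ 𝒢 A) (insertEmbedding _ 𝒢 B) := by
  refine ((isJunctionTree_iff.mp hG).2.2 A B t hA hB).of_forall_adj _ (fun _ h => h) ?_
  intro a b hab ha hb
  by_cases he : s(a, b) = d.edge
  · have route := fun ht => hG.reachableWithin_attachUnion_of_mem_inter hV hw hd (t := t) ht
    rcases Sym2.eq_iff.mp he with ⟨rfl, rfl⟩ | ⟨rfl, rfl⟩
    · exact route (hsep (Finset.mem_inter.mpr ⟨ha, hb⟩))
    · exact (route (hsep (Finset.mem_inter.mpr ⟨hb, ha⟩))).symm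
  · exact (attachUnion_adj_of_adj (deleteEdges_adj.mpr ⟨hab, he⟩)).reachableWithin ha hb

theorem isJunctionTree_attachUnion (hG : IsJunctionTree 𝒢 G) (hX : X.1.Nonempty)
    (hY : Y.1.Nonempty) (hV : X.1 ∪ Y.1 ∉ 𝒢) {w : G.Walk X Y} (hw : w.IsPath) {d : G.Dart}
    (hd : d ∈ w.darts) (hsep : d.fst.1 ∩ d.snd.1 ⊆ X.1 ∩ Y.1) :
    IsJunctionTree (insert (X.1 ∪ Y.1) 𝒢) (attachUnion G d.edge X Y) := by
  obtain ⟨hac, hint, -⟩ := isJunctionTree_iff.mp hG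
  have hold : ∀ {t : Fin K} {A B : {C // C ∈ 𝒢}}, t ∈ A.1 → t ∈ B.1 →
      (attachUnion G d.edge X Y).ReachableWithin (t ∈ ·.1)
        (insertEmbedding _ 𝒢 A) (insertEmbedding _ 𝒢 B) :=
    hG.reachableWithin_attachUnion hV hw hd hsep
  have hnew : ∀ {t : Fin K} {B : {C // C ∈ 𝒢}}, t ∈ X.1 ∪ Y.1 → t ∈ B.1 →
      (attachUnion G d.edge X Y).ReachableWithin (t ∈ ·.1)
        ⟨X.1 ∪ Y.1, Finset.mem_insert_self _ _⟩ (insertEmbedding _ 𝒢 B) := by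
    intro t B ht htB
    rcases Finset.mem_union.mp ht with htX | htY
    · exact ((attachUnion_adj_left hV).reachableWithin ht htX).trans (hold htX htB)
    · exact ((attachUnion_adj_right hV).reachableWithin ht htY).trans (hold htY htB)
  refine isJunctionTree_iff.mpr ⟨isAcyclic_attachUnion hac hV
    (hac.not_reachable_deleteEdges_of_mem_darts hw hd),
    fun _ _ => attachUnion_inter_nonempty_of_adj hint hX hY, fun A B t hA hB => ?_⟩
  induction A using insertEmbedding_cases <;> induction B using insertEmbedding_cases
  · exact .refl hA
  · exact hnew hA hB
  · exact (hnew hB hA).symm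
  · exact hold hA hB

end Attach

end JunctionTree

theorem modify_tree_general {K n : ℕ} (hn : 1 ≤ n) (𝒢 : Finset (Finset (Fin K)))
    (G : SimpleGraph {C // C ∈ 𝒢}) (hG : IsJunctionTree 𝒢 G)
    (X Y : {C // C ∈ 𝒢})
    (hX : X.1.card = n) (hY : Y.1.card = n) (hXY : (X.1 ∩ Y.1).card = n - 1)
    (hV : X.1 ∪ Y.1 ∉ 𝒢)
    (w : G.Walk X Y) (hw : w.IsPath) (d : G.Dart) (hd : d ∈ w.darts)
    (hdsep : ((d.toProd.1).1 ∩ (d.toProd.2).1).card = n - 1) :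
    IsJunctionTree (insert (X.1 ∪ Y.1) 𝒢)
      (SimpleGraph.fromEdgeSet
        (let ι : {C // C ∈ 𝒢} → {C // C ∈ insert (X.1 ∪ Y.1) 𝒢} :=
          fun C => ⟨C.1, Finset.mem_insert_of_mem C.2⟩
        let V' : {C // C ∈ insert (X.1 ∪ Y.1) 𝒢} :=
          ⟨X.1 ∪ Y.1, Finset.mem_insert_self _ _⟩
        (Sym2.map ι '' (G.edgeSet \ {s(d.toProd.1, d.toProd.2)})) ∪
          {s(V', ι X), s(V', ι Y)})) := by
  have hXY_sub : X.1 ∩ Y.1 ⊆ d.fst.1 ∩ d.snd.1 := fun t ht => Finset.mem_inter.mpr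
    ⟨hG.inter_subset_of_mem_support hw (w.dart_fst_mem_support_of_mem_darts hd) ht,
      hG.inter_subset_of_mem_support hw (w.dart_snd_mem_support_of_mem_darts hd) ht⟩
  have hsep : d.fst.1 ∩ d.snd.1 ⊆ X.1 ∩ Y.1 :=
    (Finset.eq_of_subset_of_card_le hXY_sub (hdsep.trans hXY.symm).le).superset
  rw [← attachUnion_eq_fromEdgeSet]
  exact isJunctionTree_attachUnion hG (Finset.card_pos.mp (by omega))
    (Finset.card_pos.mp (by omega)) hV hw hd hsep

/-- Inserting the new clique `V = X ∪ Y` with edges to `X` and `Y` and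
breaking the resulting cycle by removing an edge with a separator of size `n - 1` on the
original path between `X` and `Y` yields again a junction tree. -/
theorem modify_tree {K n : ℕ} (hn : 1 ≤ n) (𝒢 : Finset (Finset (Fin K)))
    (G : SimpleGraph {C // C ∈ 𝒢}) (hG : IsJunctionTree 𝒢 G)
    (hsize : ∀ C ∈ 𝒢, C.card ≤ n + 1)
    (X Y : {C // C ∈ 𝒢}) (hne : X ≠ Y)
    (hX : X.1.card = n) (hY : Y.1.card = n) (hXY : (X.1 ∩ Y.1).card = n - 1)
    (hV : X.1 ∪ Y.1 ∉ 𝒢)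
    (w : G.Walk X Y) (hw : w.IsPath) (d : G.Dart) (hd : d ∈ w.darts)
    (hdsep : ((d.toProd.1).1 ∩ (d.toProd.2).1).card = n - 1) :
    IsJunctionTree (insert (X.1 ∪ Y.1) 𝒢)
      (SimpleGraph.fromEdgeSet
        (let ι : {C // C ∈ 𝒢} → {C // C ∈ insert (X.1 ∪ Y.1) 𝒢} :=
          fun C => ⟨C.1, Finset.mem_insert_of_mem C.2⟩
        let V' : {C // C ∈ insert (X.1 ∪ Y.1) 𝒢} :=
          ⟨X.1 ∪ Y.1, Finset.mem_insert_self _ _⟩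
        (Sym2.map ι '' (G.edgeSet \ {s(d.toProd.1, d.toProd.2)})) ∪
          {s(V', ι X), s(V', ι Y)})) :=
  modify_tree_general hn 𝒢 G hG X Y hX hY hXY hV w hw d hd hdsep
end
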